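/- arXiv:2506.09812 — 2 statements merged into one kernel-verified Lean document; each statement's English description precedes it below -/
import Mathlib

section
/- Let c : X × X → [0,∞) satisfy the triangle inequality, and suppose there are α > 0 and, for each compact K ⊆ X, a constant C_K with c(x,x') ≤ C_K·d(x,x')^α for x, x' in K ∩ 𝒞, where 𝒞 is a set. If x, x' lie in a connected compact subset U ⊆ 𝒞 ∩ K whose Hausdorff dimension is strictly less than α, then c(x, x') = 0. -/
open Metric MeasureTheory Filter Topology
open scoped ENNReal NNReal

/-!
Since `dimH U < α`, the `α`-dimensional Hausdorff measure of `U` vanishes, so `U` has a cover by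
open sets `V i` with `∑ diam (V i) ^ α` as small as we like; by compactness finitely many suffice.
Connectedness of `U` then lets one pass from `x` to `x'` through points of `U`, each step inside
one `V i` and each `V i` used at most once, so the triangle inequality and the Hölder bound give
`c x x' ≤ C * ∑ diam (V i) ^ α`.
-/

theorem le_sum_of_isPreconnected_of_subset_biUnion {X ι : Type*} [TopologicalSpace X]
    {c : X → X → ℝ} (htri : ∀ x y z, c x z ≤ c x y + c y z) {U : Set X}
    (hU : IsPreconnected U) {V : ι → Set X} {s : Finset ι} (hV : ∀ i ∈ s, IsOpen (V i))
    (hUV : U ⊆ ⋃ i ∈ s, V i) {w : ι → ℝ} (hw0 : ∀ i ∈ s, 0 ≤ w i)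
    (hw : ∀ i ∈ s, ∀ y ∈ U ∩ V i, ∀ z ∈ U ∩ V i, c y z ≤ w i)
    {x x' : X} (hx : x ∈ U) (hx' : x' ∈ U) : c x x' ≤ ∑ i ∈ s, w i := by
  classical
  let Good (T : Finset ι) : Prop :=
    T ⊆ s ∧ x ∈ ⋃ i ∈ T, V i ∧ ∀ z ∈ U ∩ ⋃ i ∈ T, V i, c x z ≤ ∑ i ∈ T, w i
  obtain ⟨i₀, hi₀, hxi₀⟩ := Set.mem_iUnion₂.mp (hUV hx)
  have hgood₀ : Good {i₀} := by
    refine ⟨by simpa using hi₀, by simpa using hxi₀, ?_⟩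
    rintro z ⟨hzU, hz⟩
    simpa using hw i₀ hi₀ x ⟨hx, hxi₀⟩ z ⟨hzU, by simpa using hz⟩
  obtain ⟨T, hT, hTmax⟩ := Finset.exists_max_image (s.powerset.filter Good) Finset.card
    ⟨{i₀}, Finset.mem_filter.mpr ⟨Finset.mem_powerset.mpr hgood₀.1, hgood₀⟩⟩
  obtain ⟨-, hTs, hxT, hcT⟩ := Finset.mem_filter.mp hT
  -- A maximal good family already covers `U`: otherwise connectedness yields a member of the
  -- complementary family meeting it inside `U`, and adding that member keeps the family good.
  suffices hUT : U ⊆ ⋃ i ∈ T, V i from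
    (hcT x' ⟨hx', hUT hx'⟩).trans (Finset.sum_le_sum_of_subset_of_nonneg hTs fun i hi _ => hw0 i hi)
  by_contra hUT
  obtain ⟨u, huU, huT⟩ := Set.not_subset.mp hUT
  have hcover : U ⊆ (⋃ i ∈ T, V i) ∪ ⋃ i ∈ s \ T, V i := by
    rwa [← Finset.set_biUnion_union, Finset.union_sdiff_of_subset hTs]
  have hopen : ∀ S ⊆ s, IsOpen (⋃ i ∈ S, V i) := fun S hS =>
    isOpen_biUnion fun i hi => hV i (hS hi)
  have huB : u ∈ ⋃ i ∈ s \ T, V i := (hcover huU).resolve_left huT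
  obtain ⟨z, hzU, hzT, hzB⟩ := hU _ _ (hopen T hTs) (hopen _ Finset.sdiff_subset) hcover
    ⟨x, hx, hxT⟩ ⟨u, huU, huB⟩
  obtain ⟨j, hj, hzj⟩ := Set.mem_iUnion₂.mp hzB
  obtain ⟨hjs, hjT⟩ := Finset.mem_sdiff.mp hj
  have hgood : Good (insert j T) := by
    refine ⟨Finset.insert_subset hjs hTs, Set.biUnion_mono (Finset.subset_insert j T)
      (fun _ _ => subset_rfl) hxT, ?_⟩
    rintro y ⟨hyU, hy⟩
    rw [Finset.sum_insert hjT]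
    rw [Finset.set_biUnion_insert] at hy
    rcases hy with hyj | hyT
    · linarith [htri x z y, hcT z ⟨hzU, hzT⟩, hw j hjs z ⟨hzU, hzj⟩ y ⟨hyU, hyj⟩]
    · linarith [hcT y ⟨hyU, hyT⟩, hw0 j hjs]
  have := hTmax (insert j T)
    (Finset.mem_filter.mpr ⟨Finset.mem_powerset.mpr hgood.1, hgood⟩)
  rw [Finset.card_insert_of_notMem hjT] at this
  omega

theorem ediam_ne_top_of_tsum_ediam_rpow_ne_top {X ι : Type*} [PseudoEMetricSpace X]
    {V : ι → Set X} {d : ℝ} (hd : 0 < d) (h : ∑' i, ediam (V i) ^ d ≠ ⊤) (i : ι) :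
    ediam (V i) ≠ ⊤ := by
  rw [Ne, ← ENNReal.rpow_eq_top_iff_of_pos hd]
  exact ne_top_of_le_ne_top h (ENNReal.le_tsum i)

theorem ENNReal.exists_pos_add_two_mul_rpow_lt {a η : ℝ≥0∞} (ha : a ≠ ⊤) (hη : η ≠ 0) {d : ℝ}
    (hd : 0 ≤ d) : ∃ δ : ℝ≥0, 0 < δ ∧ (a + 2 * δ) ^ d < a ^ d + η := by
  have hcont : Tendsto (fun δ : ℝ≥0 => (a + 2 * (δ : ℝ≥0∞)) ^ d) (𝓝[>] 0) (𝓝 (a ^ d)) := by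
    have : Continuous fun δ : ℝ≥0 => (a + 2 * (δ : ℝ≥0∞)) ^ d := by fun_prop (disch := simp)
    simpa using (this.tendsto 0).mono_left nhdsWithin_le_nhds
  have hlt : a ^ d < a ^ d + η := ENNReal.lt_add_right (ENNReal.rpow_ne_top_of_nonneg hd ha) hη
  obtain ⟨δ, hδ, hδpos⟩ := ((hcont.eventually_lt_const hlt).and self_mem_nhdsWithin).exists
  exact ⟨δ, hδpos, hδ⟩

theorem ediam_rpow_le_iSup_nonempty {X : Type*} [PseudoEMetricSpace X] (t : Set X) {d : ℝ}
    (hd : 0 < d) : ediam t ^ d ≤ ⨆ _ : t.Nonempty, ediam t ^ d := by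
  rcases t.eq_empty_or_nonempty with rfl | ht
  · simp [ENNReal.zero_rpow_of_pos hd]
  · exact le_iSup_of_le ht le_rfl

theorem exists_isOpen_cover_tsum_ediam_rpow_lt {X : Type*} [EMetricSpace X] [MeasurableSpace X]
    [BorelSpace X] {s : Set X} {d : ℝ} (hd : 0 < d) (hs : μH[d] s = 0) {ε : ℝ≥0∞}
    (hε : ε ≠ 0) : ∃ V : ℕ → Set X, (∀ n, IsOpen (V n)) ∧ s ⊆ ⋃ n, V n ∧
      ∑' n, ediam (V n) ^ d < ε := by
  have hinf : ⨅ (t : ℕ → Set X) (_ : s ⊆ ⋃ n, t n) (_ : ∀ n, ediam (t n) ≤ ⊤),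
      ∑' n, ⨆ _ : (t n).Nonempty, ediam (t n) ^ d < ε / 2 := by
    refine lt_of_le_of_lt ?_ (ENNReal.half_pos hε)
    rw [← hs, Measure.hausdorffMeasure_apply]
    exact le_iSup₂_of_le (f := fun (r : ℝ≥0∞) (_ : 0 < r) =>
      ⨅ (t : ℕ → Set X) (_ : s ⊆ ⋃ n, t n) (_ : ∀ n, ediam (t n) ≤ r),
        ∑' n, ⨆ _ : (t n).Nonempty, ediam (t n) ^ d) ⊤ ENNReal.zero_lt_top le_rfl
  simp only [iInf_lt_iff] at hinf
  obtain ⟨t, hst, -, ht⟩ := hinf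
  replace ht : ∑' n, ediam (t n) ^ d < ε / 2 :=
    (ENNReal.tsum_le_tsum fun n => ediam_rpow_le_iSup_nonempty (t n) hd).trans_lt ht
  have hfin := ediam_ne_top_of_tsum_ediam_rpow_ne_top hd (ht.trans_le le_top).ne
  obtain ⟨η, hη, hηsum⟩ := ENNReal.exists_pos_sum_of_countable' (ENNReal.half_pos hε).ne' ℕ
  choose δ hδ hδη using fun n =>
    ENNReal.exists_pos_add_two_mul_rpow_lt (hfin n) (hη n).ne' hd.le
  refine ⟨fun n => thickening (δ n) (t n), fun n => isOpen_thickening,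
    hst.trans (Set.iUnion_mono fun n => self_subset_thickening (by exact_mod_cast hδ n) _), ?_⟩
  calc ∑' n, ediam (thickening (δ n) (t n)) ^ d
      ≤ ∑' n, (ediam (t n) ^ d + η n) := ENNReal.tsum_le_tsum fun n =>
        (ENNReal.rpow_le_rpow (ediam_thickening_le (δ n)) hd.le).trans (hδη n).le
    _ = ∑' n, ediam (t n) ^ d + ∑' n, η n := ENNReal.tsum_add
    _ < ε / 2 + ε / 2 := ENNReal.add_lt_add ht hηsum
    _ = ε := ENNReal.add_halves ε

theorem sum_diam_rpow_lt_of_tsum_ediam_rpow_lt {X ι : Type*} [PseudoMetricSpace X]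
    {V : ι → Set X} {d η : ℝ} (h : ∑' i, ediam (V i) ^ d < ENNReal.ofReal η)
    (s : Finset ι) : ∑ i ∈ s, diam (V i) ^ d < η := by
  have hfin : ∀ i, ediam (V i) ^ d ≠ ⊤ := fun i =>
    ((ENNReal.le_tsum i).trans_lt (h.trans ENNReal.ofReal_lt_top)).ne
  have hη : 0 ≤ η := (ENNReal.ofReal_pos.mp (h.trans_le' zero_le)).le
  calc ∑ i ∈ s, diam (V i) ^ d = (∑ i ∈ s, ediam (V i) ^ d).toReal := by
        simp only [diam, ENNReal.toReal_rpow, ENNReal.toReal_sum fun i _ => hfin i]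
    _ < (ENNReal.ofReal η).toReal :=
        (ENNReal.toReal_lt_toReal (ENNReal.sum_ne_top.mpr fun i _ => hfin i)
          ENNReal.ofReal_ne_top).2 ((ENNReal.sum_le_tsum s).trans_lt h)
    _ = η := ENNReal.toReal_ofReal hη

/-- If `c` is a nonnegative symmetric-free cost satisfying the triangle inequality and an
`α`-Hölder bound `c(x,x') ≤ C_K d(x,x')^α` on each compact `K` (for points of `𝒞`), and
`x, x'` lie in a connected compact `U ⊆ 𝒞` with Hausdorff dimension `< α`, then
`c(x,x') = 0`. -/
theorem stmt_17 {X : Type*} [MetricSpace X]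
    (c : X → X → ℝ) (hc0 : ∀ x y : X, 0 ≤ c x y)
    (htri : ∀ x y z : X, c x z ≤ c x y + c y z)
    (𝒞 : Set X) (α : ℝ) (hα : 0 < α)
    (hHolder : ∀ K : Set X, IsCompact K → ∃ C > (0:ℝ), ∀ x ∈ K ∩ 𝒞, ∀ y ∈ K ∩ 𝒞,
      c x y ≤ C * dist x y ^ α)
    (U : Set X) (hUcomp : IsCompact U) (hUconn : IsConnected U) (hU𝒞 : U ⊆ 𝒞)
    (hdim : dimH U < ENNReal.ofReal α)
    (x x' : X) (hx : x ∈ U) (hx' : x' ∈ U) :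
    c x x' = 0 := by
  borelize X
  have hμ : μH[α] U = 0 := by
    simpa [hα.le] using hausdorffMeasure_of_dimH_lt (d := α.toNNReal) hdim
  obtain ⟨C, hC, hCU⟩ := hHolder U hUcomp
  refine le_antisymm (le_of_forall_pos_le_add fun ε hε => ?_) (hc0 x x')
  obtain ⟨V, hVo, hUV, hVsum⟩ := exists_isOpen_cover_tsum_ediam_rpow_lt hα hμ
    (ENNReal.ofReal_pos.mpr (div_pos hε hC)).ne'
  obtain ⟨s, hs⟩ := hUcomp.elim_finite_subcover V hVo hUV
  have hVfin := ediam_ne_top_of_tsum_ediam_rpow_ne_top hα (hVsum.trans ENNReal.ofReal_lt_top).ne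
  calc c x x' ≤ ∑ i ∈ s, C * diam (V i) ^ α := by
        refine le_sum_of_isPreconnected_of_subset_biUnion htri hUconn.isPreconnected
          (fun i _ => hVo i) hs (fun i _ => by positivity) (fun i _ y hy z hz => ?_) hx hx'
        calc c y z ≤ C * dist y z ^ α := hCU y ⟨hy.1, hU𝒞 hy.1⟩ z ⟨hz.1, hU𝒞 hz.1⟩
          _ ≤ C * diam (V i) ^ α := by
            gcongr
            exact dist_le_diam_of_mem' (hVfin i) hy.2 hz.2
    _ = C * ∑ i ∈ s, diam (V i) ^ α := (Finset.mul_sum ..).symm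
    _ ≤ C * (ε / C) := by gcongr; exact (sum_diam_rpow_lt_of_tsum_ediam_rpow_lt hVsum s).le
    _ = 0 + ε := by field_simp; ring
end

section
/- Let (X, d) be a metric space, τ > 0 with ε_L := Lτ < 1 where L is the Lipschitz constant of the slope |∂E|, and assume (X,d) is a length space and |∂E| is a strong upper gradient of E. Then for all x, x' ∈ X with d̲ := d(x,x'), the gradient-flow transition cost satisfies c^F(x,x') ≤ d̲·|∂E|(x) + (L/2)·d̲², where c^F(x,x') := inf over unit-speed AC curves γ : [0,s] → X from x to x' of ∫₀^s |∂E|(γ(σ)) dσ. -/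
/-- In a length space, if the slope `g = |∂E|` is `L`-Lipschitz and a strong upper gradient
of `E`, `τ > 0` with `Lτ < 1`, then the gradient-flow transition cost
`c^F(x,x') = inf over unit-speed curves γ from x to x' of ∫ g(γ)` satisfies
`c^F(x,x') ≤ d(x,x')·g(x) + (L/2)·d(x,x')²`. -/
theorem stmt_19 {X : Type*} [MetricSpace X]
    (E g : X → ℝ) (L τ : ℝ) (hL : 0 < L) (hτ : 0 < τ) (hεL : L * τ < 1)
    (hLip : LipschitzWith (Real.toNNReal L) g)
    (hg0 : ∀ y : X, 0 ≤ g y)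
    (hupper : ∀ (a b : ℝ) (γ : ℝ → X), a ≤ b → (∀ s t : ℝ, dist (γ s) (γ t) ≤ |s - t|) →
      |E (γ a) - E (γ b)| ≤ ∫ s in a..b, g (γ s))
    (hgeo : ∀ y y' : X, ∀ ε > 0, ∃ γ : ℝ → X,
      γ 0 = y ∧ γ (dist y y' + ε) = y' ∧ ∀ s t : ℝ, dist (γ s) (γ t) ≤ |s - t|) :
    ∀ x x' : X,
      sInf { v : ℝ | ∃ (s : ℝ) (γ : ℝ → X), 0 ≤ s ∧ γ 0 = x ∧ γ s = x' ∧
          (∀ u u' : ℝ, dist (γ u) (γ u') ≤ |u - u'|) ∧ v = ∫ σ in (0:ℝ)..s, g (γ σ) }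
        ≤ dist x x' * g x + (L / 2) * dist x x' ^ 2 := by
  intro x x'
  set S := { v : ℝ | ∃ (s : ℝ) (γ : ℝ → X), 0 ≤ s ∧ γ 0 = x ∧ γ s = x' ∧
      (∀ u u' : ℝ, dist (γ u) (γ u') ≤ |u - u'|) ∧ v = ∫ σ in (0:ℝ)..s, g (γ σ) } with hS
  have hbdd : BddBelow S := by
    refine ⟨0, ?_⟩
    rintro v ⟨s, γ, hs, -, -, -, rfl⟩
    exact intervalIntegral.integral_nonneg hs (fun u _ => hg0 _)
  set d := dist x x' with hd
  have hd0 : 0 ≤ d := dist_nonneg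
  have key : ∀ ε > (0:ℝ), sInf S ≤ (d + ε) * g x + L / 2 * (d + ε) ^ 2 := by
    intro ε hε
    obtain ⟨γ, hγ0, hγs, hγlip⟩ := hgeo x x' ε hε
    set s := d + ε with hsdef
    have hs0 : (0:ℝ) ≤ s := by positivity
    have hγLW : LipschitzWith 1 γ := by
      apply LipschitzWith.of_dist_le_mul
      intro a b
      simpa [Real.dist_eq] using hγlip a b
    have hcont : Continuous (fun σ => g (γ σ)) :=
      (hLip.comp hγLW).continuous
    have hmem : (∫ σ in (0:ℝ)..s, g (γ σ)) ∈ S :=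
      ⟨s, γ, hs0, hγ0, hγs, hγlip, rfl⟩
    have h1 : sInf S ≤ ∫ σ in (0:ℝ)..s, g (γ σ) := csInf_le hbdd hmem
    have hbound : ∀ σ ∈ Set.Icc (0:ℝ) s, g (γ σ) ≤ g x + L * σ := by
      intro σ hσ
      have := hLip.dist_le_mul (γ σ) (γ 0)
      rw [Real.dist_eq, hγ0] at this
      have h2 : g (γ σ) - g x ≤ L * dist (γ σ) x := le_trans (le_abs_self _) (by
        simpa [Real.coe_toNNReal L hL.le] using this)
      have h3 : dist (γ σ) x ≤ σ := by
        have := hγlip σ 0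
        rw [hγ0] at this
        simpa [abs_of_nonneg hσ.1] using this
      have h4 : L * dist (γ σ) x ≤ L * σ := by
        exact mul_le_mul_of_nonneg_left h3 hL.le
      linarith
    have h5 : (∫ σ in (0:ℝ)..s, g (γ σ)) ≤ ∫ σ in (0:ℝ)..s, (g x + L * σ) := by
      apply intervalIntegral.integral_mono_on hs0
      · exact hcont.intervalIntegrable _ _
      · exact (continuous_const.add (continuous_const.mul continuous_id)).intervalIntegrable _ _
      · exact hbound
    have h6 : (∫ σ in (0:ℝ)..s, (g x + L * σ)) = s * g x + L / 2 * s ^ 2 := by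
      have hsplit : (∫ σ in (0:ℝ)..s, (g x + L * σ))
          = (∫ _σ in (0:ℝ)..s, g x) + ∫ σ in (0:ℝ)..s, L * σ :=
        intervalIntegral.integral_add intervalIntegrable_const
          ((continuous_const.mul continuous_id').intervalIntegrable _ _)
      rw [hsplit, intervalIntegral.integral_const, intervalIntegral.integral_const_mul,
        integral_id, smul_eq_mul]
      ring
    calc sInf S ≤ _ := h1
      _ ≤ _ := h5
      _ = s * g x + L / 2 * s ^ 2 := h6
  -- let ε → 0
  have htend : Filter.Tendsto (fun ε : ℝ => (d + ε) * g x + L / 2 * (d + ε) ^ 2)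
      (nhdsWithin 0 (Set.Ioi 0)) (nhds (d * g x + L / 2 * d ^ 2)) := by
    have : Continuous (fun ε : ℝ => (d + ε) * g x + L / 2 * (d + ε) ^ 2) := by continuity
    have h := this.tendsto 0
    simp only [add_zero] at h
    exact h.mono_left nhdsWithin_le_nhds
  have : sInf S ≤ d * g x + L / 2 * d ^ 2 := by
    refine ge_of_tendsto htend ?_
    filter_upwards [self_mem_nhdsWithin] with ε hε
    exact key ε hε
  simpa [hd] using this
end
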